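/- The map Γ defined in the previous construction, sending a pair (C, C') ∈ F(ℝ - Q_r, k) × F(ℝ - Q_r, k) to the path t ↦ (Γ_{r+1}(t), ..., Γ_{k+r}(t)) in F(ℝ^d - Q_r, k), is a continuous section of the evaluation map e_2 over F(ℝ - Q_r, k) × F(ℝ - Q_r, k): it is continuous (into the path space with compact-open topology), Γ(C,C')(0) = C, and Γ(C,C')(1) = C'. -/
import Mathlib


/-- The embedding `ℝ → ℝᵈ`, `a ↦ (a,0,…,0)`. -/
def embLine (d : ℕ) (hd : 2 ≤ d) (a : ℝ) : Fin d → ℝ :=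
  fun j => if j = ⟨0, by omega⟩ then a else 0

/-- The second standard basis vector `e_2 = (0,1,0,…,0)` of `ℝᵈ`. -/
def e2 (d : ℕ) (hd : 2 ≤ d) : Fin d → ℝ :=
  fun j => if j = ⟨1, by omega⟩ then 1 else 0

/-- The piecewise-linear path `Γ_i` (index `i` running over `r+1,…,k+r`, here
parametrized by `i : Fin k` standing for the point with label `r+1+i`): lift
`x_i` by `(r+1+i)·e_2`, translate horizontally to `x'_i + (r+1+i)·e_2`, descend
to `x'_i`. -/
noncomputable def Gam (d k r : ℕ) (hd : 2 ≤ d) (x x' : Fin k → ℝ)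
    (i : Fin k) (t : ℝ) : Fin d → ℝ :=
  if t ≤ 1/3 then
    embLine d hd (x i) + (3 * t * ((r : ℝ) + 1 + (i : ℕ))) • e2 d hd
  else if t ≤ 2/3 then
    embLine d hd (x i) + ((r : ℝ) + 1 + (i : ℕ)) • e2 d hd +
      (3 * t - 1) • (embLine d hd (x' i) - embLine d hd (x i))
  else
    embLine d hd (x' i) + (((r : ℝ) + 1 + (i : ℕ)) * (3 - 3 * t)) • e2 d hd

/-- horizontal coordinate -/
noncomputable def GamA (x x' t : ℝ) : ℝ := x + (max 0 (min 1 (3*t - 1))) * (x' - x)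

/-- vertical coordinate -/
noncomputable def GamB (c t : ℝ) : ℝ := c * min 1 (min (3*t) (3 - 3*t))

lemma clampA_zero {t : ℝ} (h : t ≤ 1/3) : max 0 (min 1 (3*t - 1)) = 0 := by
  rw [max_eq_left]; exact (min_le_right _ _).trans (by linarith)

lemma clampA_one {t : ℝ} (h : 2/3 ≤ t) : max 0 (min 1 (3*t - 1)) = 1 := by
  rw [min_eq_left (by linarith), max_eq_right (by norm_num)]

lemma Gam_eq (d k r : ℕ) (hd : 2 ≤ d) (x x' : Fin k → ℝ) (i : Fin k) (t : ℝ) :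
    Gam d k r hd x x' i t = fun j =>
      if j = (⟨0, by omega⟩ : Fin d) then GamA (x i) (x' i) t
      else if j = (⟨1, by omega⟩ : Fin d) then GamB ((r : ℝ) + 1 + (i : ℕ)) t
      else 0 := by
  funext j
  have h01 : (⟨0, by omega⟩ : Fin d) ≠ ⟨1, by omega⟩ := by simp [Fin.ext_iff]
  unfold Gam GamA GamB embLine e2
  rcases le_or_gt t (1/3) with h1 | h1
  · have hm1 : min 1 (min (3*t) (3 - 3*t)) = 3*t := by
      have h3 : min (3*t) (3 - 3*t) = 3*t := min_eq_left (by linarith)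
      rw [h3, min_eq_right (by linarith)]
    rw [if_pos h1, hm1, clampA_zero h1]
    by_cases hj0 : j = (⟨0, by omega⟩ : Fin d)
    · subst hj0; simp [Fin.mk.injEq]
    · by_cases hj1 : j = (⟨1, by omega⟩ : Fin d)
      · subst hj1; simp [Fin.mk.injEq]; try ring
      · simp [hj0, hj1]
  · rcases le_or_gt t (2/3) with h2 | h2
    · have hm1 : min 1 (min (3*t) (3 - 3*t)) = 1 := by
        rw [min_eq_left]; exact le_min (by linarith) (by linarith)
      have hm2 : max 0 (min 1 (3*t - 1)) = 3*t - 1 := by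
        rw [min_eq_right (by linarith), max_eq_right (by linarith)]
      rw [if_neg (by linarith), if_pos h2, hm1, hm2]
      by_cases hj0 : j = (⟨0, by omega⟩ : Fin d)
      · subst hj0; simp [Fin.mk.injEq]; try ring
      · by_cases hj1 : j = (⟨1, by omega⟩ : Fin d)
        · subst hj1; simp [Fin.mk.injEq]; try ring
        · simp [hj0, hj1]
    · have hm1 : min 1 (min (3*t) (3 - 3*t)) = 3 - 3*t := by
        have h3 : min (3*t) (3 - 3*t) = 3 - 3*t := min_eq_right (by linarith)
        rw [h3, min_eq_right (by linarith)]
      rw [if_neg (by linarith), if_neg (by linarith), hm1, clampA_one h2.le]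
      by_cases hj0 : j = (⟨0, by omega⟩ : Fin d)
      · subst hj0; simp [Fin.mk.injEq]; try ring
      · by_cases hj1 : j = (⟨1, by omega⟩ : Fin d)
        · subst hj1; simp [Fin.mk.injEq]; try ring
        · simp [hj0, hj1]

/-- `F(ℝ − Q_r, k)`: `k` distinct points on the line avoiding the obstacles. -/
def LineConf (k r : ℕ) (q : Fin r → ℝ) : Type :=
  {x : Fin k → ℝ // Function.Injective x ∧ ∀ i j, x i ≠ q j}

/-- `F(ℝᵈ − Q_r, k)`: `k` distinct points of `ℝᵈ` avoiding the obstacles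
`(q_j, 0, …, 0)`. -/
def ConfQ (d k r : ℕ) (hd : 2 ≤ d) (q : Fin r → ℝ) : Type :=
  {z : Fin k → (Fin d → ℝ) // Function.Injective z ∧ ∀ i j, z i ≠ embLine d hd (q j)}

instance (k r : ℕ) (q : Fin r → ℝ) : TopologicalSpace (LineConf k r q) :=
  instTopologicalSpaceSubtype

instance (d k r : ℕ) (hd : 2 ≤ d) (q : Fin r → ℝ) : TopologicalSpace (ConfQ d k r hd q) :=
  instTopologicalSpaceSubtype

lemma Gam_mem (d k r : ℕ) (hd : 2 ≤ d) (q : Fin r → ℝ)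
    (x x' : Fin k → ℝ) (hx : Function.Injective x ∧ ∀ i j, x i ≠ q j)
    (hx' : Function.Injective x' ∧ ∀ i j, x' i ≠ q j)
    (t : ℝ) (ht0 : 0 ≤ t) (ht1 : t ≤ 1) :
    Function.Injective (fun i => Gam d k r hd x x' i t) ∧
      ∀ i j, Gam d k r hd x x' i t ≠ embLine d hd (q j) := by
  have h01 : (⟨0, by omega⟩ : Fin d) ≠ ⟨1, by omega⟩ := by simp [Fin.ext_iff]
  set m := min 1 (min (3*t) (3 - 3*t)) with hm
  have hmzero : m = 0 → t = 0 ∨ t = 1 := by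
    intro h
    rcases le_or_gt (min (3*t) (3-3*t)) 1 with hle | hlt
    · rw [hm, min_eq_right hle] at h
      rcases min_eq_iff.mp h with ⟨h3, _⟩ | ⟨h3, _⟩
      · left; linarith
      · right; linarith
    · exfalso; rw [hm, min_eq_left hlt.le] at h; norm_num at h
  constructor
  · intro i i' hii
    have hB : Gam d k r hd x x' i t ⟨1, by omega⟩ = Gam d k r hd x x' i' t ⟨1, by omega⟩ :=
      congrFun hii _
    have hA : Gam d k r hd x x' i t ⟨0, by omega⟩ = Gam d k r hd x x' i' t ⟨0, by omega⟩ :=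
      congrFun hii _
    rw [Gam_eq, Gam_eq] at hB hA
    simp [Fin.mk.injEq] at hB hA
    unfold GamB at hB
    rw [← hm] at hB
    by_cases hmz : m = 0
    · rcases hmzero hmz with h | h
      · subst h
        unfold GamA at hA
        rw [clampA_zero (by norm_num)] at hA
        simp only [zero_mul, add_zero] at hA
        exact hx.1 hA
      · subst h
        unfold GamA at hA
        rw [clampA_one (by norm_num)] at hA
        simp only [one_mul] at hA
        exact hx'.1 (by linarith)
    · have hc : ((r : ℝ) + 1 + (i : ℕ)) = ((r : ℝ) + 1 + (i' : ℕ)) :=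
        mul_right_cancel₀ hmz hB
      have : ((i : ℕ) : ℝ) = ((i' : ℕ) : ℝ) := by linarith
      exact Fin.ext (by exact_mod_cast this)
  · intro i j hcon
    have hB : Gam d k r hd x x' i t ⟨1, by omega⟩ = embLine d hd (q j) ⟨1, by omega⟩ :=
      congrFun hcon _
    have hA : Gam d k r hd x x' i t ⟨0, by omega⟩ = embLine d hd (q j) ⟨0, by omega⟩ :=
      congrFun hcon _
    rw [Gam_eq] at hB hA
    unfold embLine at hB hA
    simp [Fin.mk.injEq] at hB hA
    unfold GamB at hB
    rw [← hm] at hB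
    have hc : (0:ℝ) < (r : ℝ) + 1 + (i : ℕ) := by positivity
    have hmz : m = 0 := by
      rcases mul_eq_zero.mp hB with h | h
      · linarith
      · exact h
    rcases hmzero hmz with h | h
    · subst h
      unfold GamA at hA
      rw [clampA_zero (by norm_num)] at hA
      simp only [zero_mul, add_zero] at hA
      exact hx.2 i j hA
    · subst h
      unfold GamA at hA
      rw [clampA_one (by norm_num)] at hA
      simp only [one_mul] at hA
      exact hx'.2 i j (by linarith)

/-- The map `Γ`, sending `(C, C')` to the path `t ↦ (Γ_{r+1}(t),…,Γ_{k+r}(t))`,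
is a continuous section of the evaluation map `e_2` over
`F(ℝ − Q_r, k) × F(ℝ − Q_r, k)`: it is continuous into the path space,
`Γ(C,C')(0) = C` and `Γ(C,C')(1) = C'`. -/
theorem stmt14 (d k r : ℕ) (hd : 2 ≤ d) (q : Fin r → ℝ) (hq : StrictMono q) :
    ∃ Γ : LineConf k r q × LineConf k r q → C(unitInterval, ConfQ d k r hd q),
      Continuous Γ ∧
      (∀ p : LineConf k r q × LineConf k r q, ∀ t : unitInterval, ∀ i,
        ((Γ p t : ConfQ d k r hd q).1 : Fin k → (Fin d → ℝ)) i =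
          Gam d k r hd p.1.1 p.2.1 i (t : ℝ)) ∧
      (∀ p : LineConf k r q × LineConf k r q, ∀ i,
        (Γ p 0).1 i = embLine d hd (p.1.1 i)) ∧
      (∀ p : LineConf k r q × LineConf k r q, ∀ i,
        (Γ p 1).1 i = embLine d hd (p.2.1 i)) := by
  have hGamCont : ∀ i : Fin k,
      Continuous (fun pt : (LineConf k r q × LineConf k r q) × unitInterval =>
        Gam d k r hd pt.1.1.1 pt.1.2.1 i (pt.2 : ℝ)) := by
    intro i
    have heq : (fun pt : (LineConf k r q × LineConf k r q) × unitInterval =>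
        Gam d k r hd pt.1.1.1 pt.1.2.1 i (pt.2 : ℝ)) =
        fun pt => fun j =>
          if j = (⟨0, by omega⟩ : Fin d) then GamA (pt.1.1.1 i) (pt.1.2.1 i) (pt.2 : ℝ)
          else if j = (⟨1, by omega⟩ : Fin d) then GamB ((r : ℝ) + 1 + (i : ℕ)) (pt.2 : ℝ)
          else 0 := by
      funext pt; exact Gam_eq d k r hd _ _ i _
    rw [heq]
    apply continuous_pi
    intro j
    have hx : Continuous (fun pt : (LineConf k r q × LineConf k r q) × unitInterval =>
        pt.1.1.1 i) :=
      (continuous_apply i).comp (continuous_subtype_val.comp (continuous_fst.comp continuous_fst))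
    have hx' : Continuous (fun pt : (LineConf k r q × LineConf k r q) × unitInterval =>
        pt.1.2.1 i) :=
      (continuous_apply i).comp (continuous_subtype_val.comp (continuous_snd.comp continuous_fst))
    have ht : Continuous (fun pt : (LineConf k r q × LineConf k r q) × unitInterval =>
        (pt.2 : ℝ)) := continuous_subtype_val.comp continuous_snd
    by_cases hj0 : j = (⟨0, by omega⟩ : Fin d)
    · subst hj0
      simp only [Fin.mk.injEq, if_true]
      unfold GamA
      fun_prop
    · by_cases hj1 : j = (⟨1, by omega⟩ : Fin d)
      · subst hj1
        simp only [Fin.mk.injEq, if_true, Nat.one_ne_zero, if_false,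
          show (1:ℕ) ≠ 0 by omega, show ¬((1:ℕ) = 0) by omega]
        unfold GamB
        fun_prop
      · simp only [if_neg hj0, if_neg hj1]
        exact continuous_const
  refine ⟨fun p => ContinuousMap.mk (fun t => ⟨fun i => Gam d k r hd p.1.1 p.2.1 i (t : ℝ),
      Gam_mem d k r hd q _ _ p.1.2 p.2.2 _ t.2.1 t.2.2⟩) ?_, ?_, ?_, ?_, ?_⟩
  · apply Continuous.subtype_mk
    apply continuous_pi
    intro i
    exact (hGamCont i).comp (Continuous.prodMk continuous_const continuous_id)
  · apply ContinuousMap.continuous_of_continuous_uncurry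
    apply Continuous.subtype_mk
    apply continuous_pi
    intro i
    exact hGamCont i
  · intro p t i; rfl
  · intro p i
    show Gam d k r hd p.1.1 p.2.1 i ((0 : unitInterval) : ℝ) = _
    rw [show ((0 : unitInterval) : ℝ) = 0 from rfl]
    unfold Gam
    rw [if_pos (by norm_num)]
    funext j
    simp [e2]
  · intro p i
    show Gam d k r hd p.1.1 p.2.1 i ((1 : unitInterval) : ℝ) = _
    rw [show ((1 : unitInterval) : ℝ) = 1 from rfl]
    unfold Gam
    rw [if_neg (by norm_num), if_neg (by norm_num)]
    funext j
    simp [e2]
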